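/- The final stage of the 3D DJT computes sums along discrete 3D lines: with N = 2^n and f : {0,...,N-1}³ → ℤ extended by zero, f^n(s₁, s₂, d₁, d₂) = Σ_{u=0}^{N-1} f(u, L^n_{s₁}(u) + d₁, L^n_{s₂}(u) + d₂) for all slopes s₁, s₂ ∈ {0,...,N-1} and all displacements d₁, d₂. -/

import Mathlib

open Finset

/-- Closed-form discrete line `l^n_s(u_0,...,u_{n-1})`. -/
def dline (n s : ℕ) (u : ℕ → ℕ) : ℕ :=
  ∑ i ∈ Finset.range n, u (n - 1 - i) * ((s / 2 ^ i + 1) / 2)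

/-- `i`-th binary digit of `k` (least significant first). -/
def bit (k i : ℕ) : ℕ := k / 2 ^ i % 2

/-- Discrete line applied to the binary digits of `k`. -/
def Lline (n s k : ℕ) : ℕ := dline n s (bit k)

/-- The iterative multiscale 3D DJT: stage 0 reads the input, each stage applies the
two-term two-scale recursion, with slopes and block index in decimal. -/
def djtStage (f : ℤ → ℤ → ℤ → ℤ) : ℕ → ℕ → ℕ → ℕ → ℤ → ℤ → ℤ
  | 0, v, _, _, d₁, d₂ => f (v : ℤ) d₁ d₂
  | m + 1, v, s₁, s₂, d₁, d₂ =>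
      djtStage f m (2 * v) (s₁ / 2) (s₂ / 2) d₁ d₂ +
      djtStage f m (2 * v + 1) (s₁ / 2) (s₂ / 2)
        (d₁ + (s₁ % 2 : ℤ) + (s₁ / 2 : ℤ)) (d₂ + (s₂ % 2 : ℤ) + (s₂ / 2 : ℤ))

/-!
Unfolding the recursion `m` times from block `v` sums `f` along the discrete lines over the
block `{2^m v, …, 2^m v + 2^m - 1}`. One step of the recursion splits such a block into its
lower and upper halves, which differ in the top binary digit of the offset `u`; that digit
enters the line with weight `⌈s/2⌉ = s % 2 + s / 2`, which is exactly the shift of the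
displacements in the recursion.
-/

lemma dline_succ (n s : ℕ) (u : ℕ → ℕ) :
    dline (n + 1) s u = dline n (s / 2) u + u n * ((s + 1) / 2) := by
  rw [dline, sum_range_succ', dline]
  congr 1
  · refine sum_congr rfl fun i _ => ?_
    rw [pow_succ', ← Nat.div_div_eq_div_mul, show n + 1 - 1 - (i + 1) = n - 1 - i by omega]
  · simp

lemma dline_congr {n : ℕ} (s : ℕ) {u u' : ℕ → ℕ} (h : ∀ i < n, u i = u' i) :
    dline n s u = dline n s u' :=
  sum_congr rfl fun i hi => by rw [h _ (by simp at hi; omega)]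

lemma bit_two_pow_mul_add_of_lt {m i : ℕ} (b u : ℕ) (hi : i < m) :
    bit (2 ^ m * b + u) i = bit u i := by
  have hsplit : 2 ^ m = 2 ^ i * (2 * 2 ^ (m - i - 1)) := by
    rw [← pow_succ', ← pow_add]; congr 1; omega
  rw [bit, bit, hsplit, mul_assoc, Nat.mul_add_div (by positivity), mul_assoc,
    Nat.mul_add_mod]

lemma bit_two_pow_mul_add_self {m u : ℕ} (b : ℕ) (hu : u < 2 ^ m) :
    bit (2 ^ m * b + u) m = b % 2 := by
  rw [bit, Nat.mul_add_div (by positivity), Nat.div_eq_of_lt hu, add_zero]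

lemma Lline_succ_two_pow_mul_add {m u : ℕ} (s b : ℕ) (hu : u < 2 ^ m) :
    Lline (m + 1) s (2 ^ m * b + u) = Lline m (s / 2) u + b % 2 * (s % 2 + s / 2) := by
  rw [Lline, dline_succ, bit_two_pow_mul_add_self b hu,
    dline_congr _ fun i hi => bit_two_pow_mul_add_of_lt b u hi, Lline]
  congr 2
  omega

lemma djtStage_eq_sum_Lline (f : ℤ → ℤ → ℤ → ℤ) (m v s₁ s₂ : ℕ) (d₁ d₂ : ℤ) :
    djtStage f m v s₁ s₂ d₁ d₂ =
      ∑ u ∈ range (2 ^ m),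
        f ((2 ^ m * v + u : ℕ) : ℤ) ((Lline m s₁ u : ℤ) + d₁) ((Lline m s₂ u : ℤ) + d₂) := by
  induction m generalizing v s₁ s₂ d₁ d₂ with
  | zero => simp [djtStage, Lline, dline]
  | succ m ih =>
    rw [djtStage, ih, ih, pow_succ, mul_two, sum_range_add]
    congr 1 <;> refine sum_congr rfl fun u hu => ?_ <;> rw [mem_range] at hu
    · have hlow (s : ℕ) : Lline (m + 1) s u = Lline m (s / 2) u := by
        simpa using Lline_succ_two_pow_mul_add s 0 hu
      rw [hlow, hlow]
      congr 2
      ring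
    · have hhigh (s : ℕ) :
          Lline (m + 1) s (2 ^ m + u) = Lline m (s / 2) u + (s % 2 + s / 2) := by
        simpa using Lline_succ_two_pow_mul_add s 1 hu
      rw [hhigh, hhigh]
      congr 1 <;> push_cast <;> ring

theorem djt3_final_stage_general (n : ℕ) (f : ℤ → ℤ → ℤ → ℤ)
    (s₁ : ℕ) (s₂ : ℕ) (d₁ d₂ : ℤ) :
    djtStage f n 0 s₁ s₂ d₁ d₂ =
      ∑ u ∈ Finset.range (2 ^ n),
        f (u : ℤ) ((Lline n s₁ u : ℤ) + d₁) ((Lline n s₂ u : ℤ) + d₂) := by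
  simpa using djtStage_eq_sum_Lline f n 0 s₁ s₂ d₁ d₂

theorem djt3_final_stage (n : ℕ) (f : ℤ → ℤ → ℤ → ℤ)
    (hf : ∀ x y z : ℤ,
      x < 0 ∨ (2 : ℤ) ^ n ≤ x ∨ y < 0 ∨ (2 : ℤ) ^ n ≤ y ∨ z < 0 ∨ (2 : ℤ) ^ n ≤ z →
      f x y z = 0)
    (s₁ : ℕ) (hs₁ : s₁ < 2 ^ n) (s₂ : ℕ) (hs₂ : s₂ < 2 ^ n) (d₁ d₂ : ℤ) :
    djtStage f n 0 s₁ s₂ d₁ d₂ =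
      ∑ u ∈ Finset.range (2 ^ n),
        f (u : ℤ) ((Lline n s₁ u : ℤ) + d₁) ((Lline n s₂ u : ℤ) + d₂) :=
  djt3_final_stage_general n f s₁ s₂ d₁ d₂
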